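/- arXiv:2505.10108 — 5 statements merged into one kernel-verified Lean document; each statement's English description precedes it below -/
import Mathlib

section
/- Let E be a measurable space, π a σ-finite measure on E, R : E → E a measurable involution (R ∘ R = id) whose pushforward satisfies map R π = π, and κ a Markov kernel from E to E. If κ satisfies R-twisted detailed balance with respect to π, then the two-step composed kernel κ ∘ κ, defined by (κ ∘ κ)(x, B) = ∫_E κ(z, B) κ(x, dz), also satisfies R-twisted detailed balance with respect to π. -/
/-! Integrate `f (R z, R x)` along the two-step path `x → y → z` of `π ⊗ κ ⊗ κ`. Detailed balance
applied to the first step turns this into two independent steps, one out of `x` and one out of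
`R x`. As `R` is a `π`-preserving involution, these two steps can be exchanged (Fubini plus the
substitution `x ↦ R x`), and detailed balance applied once more gives `f (x, z)` integrated along
the original path. -/

open MeasureTheory ProbabilityTheory
open scoped ENNReal

/-- A Markov kernel `κ` satisfies `R`-twisted detailed balance with respect to `π` if the
pushforward of `π ⊗ κ` under `(x, y) ↦ (R y, R x)` equals `π ⊗ κ`. -/
def TwistedDetailedBalance {E : Type*} [MeasurableSpace E] (π : Measure E) (R : E → E)
    (κ : Kernel E E) : Prop :=
  (π.compProd κ).map (fun xy => (R xy.2, R xy.1)) = π.compProd κ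

section

variable {α β γ : Type*} [MeasurableSpace α] [MeasurableSpace β] [MeasurableSpace γ]

@[fun_prop]
theorem Measurable.lintegral_kernel_comp_prod_right {κ : Kernel γ β} [IsSFiniteKernel κ]
    {g : α → γ} (hg : Measurable g) {f : α → β → ℝ≥0∞} (hf : Measurable (Function.uncurry f)) :
    Measurable fun a => ∫⁻ b, f a b ∂κ (g a) :=
  Measurable.lintegral_kernel_prod_right (κ := κ.comap g hg) hf

theorem MeasureTheory.Measure.lintegral_compProd_comp {μ : Measure α} [SFinite μ] {κ : Kernel α β}
    [IsSFiniteKernel κ] {η : Kernel β γ} [IsSFiniteKernel η] {f : α × γ → ℝ≥0∞}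
    (hf : Measurable f) :
    ∫⁻ p, f p ∂(μ ⊗ₘ (η ∘ₖ κ)) = ∫⁻ x, ∫⁻ y, ∫⁻ z, f (x, z) ∂η y ∂κ x ∂μ := by
  rw [Measure.lintegral_compProd hf]
  exact lintegral_congr fun x => Kernel.lintegral_comp η κ x (by fun_prop)

theorem lintegral_lintegral_lintegral_swap_of_involutive {π : Measure α} {R : α → α}
    (hRπ : MeasurePreserving R π π) (hRR : Function.Involutive R) {κ : Kernel α β}
    [IsSFiniteKernel κ] {F : β × β → ℝ≥0∞} (hF : Measurable F) :
    ∫⁻ x, ∫⁻ y, ∫⁻ z, F (y, z) ∂κ (R x) ∂κ x ∂π = ∫⁻ x, ∫⁻ y, ∫⁻ z, F (z, y) ∂κ (R x) ∂κ x ∂π :=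
  calc ∫⁻ x, ∫⁻ y, ∫⁻ z, F (y, z) ∂κ (R x) ∂κ x ∂π
      = ∫⁻ x, ∫⁻ z, ∫⁻ y, F (y, z) ∂κ x ∂κ (R x) ∂π :=
        lintegral_congr fun x => lintegral_lintegral_swap (by fun_prop)
    _ = ∫⁻ x, ∫⁻ z, ∫⁻ y, F (y, z) ∂κ (R (R x)) ∂κ (R x) ∂π := by simp only [hRR _]
    _ = ∫⁻ x, ∫⁻ z, ∫⁻ y, F (y, z) ∂κ (R x) ∂κ x ∂π :=
        hRπ.lintegral_comp (f := fun x => ∫⁻ z, ∫⁻ y, F (y, z) ∂κ (R x) ∂κ x)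
          (by have := hRπ.measurable; fun_prop)

end

theorem TwistedDetailedBalance.lintegral_lintegral_reverse {E : Type*} [MeasurableSpace E]
    {π : Measure E} [SFinite π] {R : E → E} {κ : Kernel E E} [IsSFiniteKernel κ]
    (h : TwistedDetailedBalance π R κ) (hR : Measurable R) {f : E × E → ℝ≥0∞}
    (hf : Measurable f) :
    ∫⁻ x, ∫⁻ y, f (R y, R x) ∂κ x ∂π = ∫⁻ x, ∫⁻ y, f (x, y) ∂κ x ∂π := by
  have hσ : Measurable fun p : E × E => (R p.2, R p.1) := by fun_prop
  calc ∫⁻ x, ∫⁻ y, f (R y, R x) ∂κ x ∂π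
      = ∫⁻ p, f (R p.2, R p.1) ∂(π ⊗ₘ κ) := (Measure.lintegral_compProd (hf.comp hσ)).symm
    _ = ∫⁻ p, f p ∂(π ⊗ₘ κ) := by
        rw [← lintegral_map hf hσ]
        exact congrArg (fun ν => ∫⁻ p, f p ∂ν) h
    _ = ∫⁻ x, ∫⁻ y, f (x, y) ∂κ x ∂π := Measure.lintegral_compProd hf

/-- If `κ` satisfies `R`-twisted detailed balance with respect to `π`, `R` is a measurable
involution preserving `π`, then the two-step composed kernel `κ ∘ₖ κ` also satisfies
`R`-twisted detailed balance with respect to `π`. -/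
theorem twistedDetailedBalance_comp {E : Type*} [MeasurableSpace E]
    (π : Measure E) [SigmaFinite π]
    (R : E → E) (hR : Measurable R) (hRR : R ∘ R = id) (hRπ : π.map R = π)
    (κ : Kernel E E) [IsMarkovKernel κ]
    (h : TwistedDetailedBalance π R κ) :
    TwistedDetailedBalance π R (κ.comp κ) := by
  have hinv : Function.Involutive R := congrFun hRR
  refine Measure.ext_of_lintegral _ fun f hf => ?_
  rw [lintegral_map hf (by fun_prop)]
  calc ∫⁻ p, f (R p.2, R p.1) ∂(π ⊗ₘ (κ ∘ₖ κ))
      = ∫⁻ x, ∫⁻ y, ∫⁻ z, f (R z, R x) ∂κ y ∂κ x ∂π :=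
        Measure.lintegral_compProd_comp (by fun_prop)
    _ = ∫⁻ x, ∫⁻ y, ∫⁻ z, f (R z, y) ∂κ (R x) ∂κ x ∂π := by
        simpa only [hinv _] using (h.lintegral_lintegral_reverse hR
          (f := fun p => ∫⁻ z, f (R z, R p.1) ∂κ p.2) (by fun_prop)).symm
    _ = ∫⁻ x, ∫⁻ y, ∫⁻ z, f (R y, z) ∂κ (R x) ∂κ x ∂π :=
        lintegral_lintegral_lintegral_swap_of_involutive ⟨hR, hRπ⟩ hinv
          (F := fun p => f (R p.2, p.1)) (by fun_prop)
    _ = ∫⁻ x, ∫⁻ y, ∫⁻ z, f (x, z) ∂κ y ∂κ x ∂π := by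
        simpa only [hinv _] using (h.lintegral_lintegral_reverse hR
          (f := fun p => ∫⁻ z, f (R p.2, z) ∂κ (R p.1)) (by fun_prop)).symm
    _ = ∫⁻ p, f p ∂(π ⊗ₘ (κ ∘ₖ κ)) := (Measure.lintegral_compProd_comp hf).symm
end

section
/- Let Φ and Ψ be measurable spaces, π_Φ a σ-finite measure on Φ, π_Ψ a probability measure on Ψ, and σ : Ψ → Ψ a measurable involution with map σ π_Ψ = π_Ψ. Let R : Φ × Ψ → Φ × Ψ be R(φ, ψ) = (φ, σ(ψ)). Let κ be a Markov kernel from Φ × Ψ to Φ × Ψ that satisfies R-twisted detailed balance with respect to the product measure π_Φ × π_Ψ. Define the marginal Markov kernel κ̄ from Φ to Φ by κ̄(φ, A) = ∫_Ψ κ((φ, ψ), A × Ψ) π_Ψ(dψ). Then κ̄ satisfies ordinary detailed balance with respect to π_Φ: the measure π_Φ ⊗ κ̄ on Φ × Φ is invariant under the swap map (φ, φ′) ↦ (φ′, φ). -/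
open MeasureTheory ProbabilityTheory

/-!
On a rectangle `A × B`, the measure `π_Φ ⊗ κ̄` agrees with `(π_Φ × π_Ψ) ⊗ κ` on the cylinder
`(A × Ψ) × (B × Ψ)`. The twist `R` moves only the `Ψ`-coordinate, so it fixes such cylinders,
and twisted detailed balance makes their measure symmetric in `A` and `B`. A measure on `Φ × Φ`
that is symmetric on rectangles and finite on the strips `S × Φ`, for `S` running through the
spanning sets of the σ-finite `π_Φ`, is swap-invariant.
-/

open Set
open scoped ENNReal

namespace MeasureTheory.Measure

variable {α β : Type*} [MeasurableSpace α] [MeasurableSpace β]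

/-- Rectangles do not determine a σ-finite measure on a product in general; they do once the
measure is finite on a countable cover by strips `s i ×ˢ univ`. -/
theorem ext_of_prod_of_iUnion_prod_univ {ν₁ ν₂ : Measure (α × β)} (s : ℕ → Set α)
    (hs : ∀ i, MeasurableSet (s i)) (hcover : ⋃ i, s i = univ) (hfin : ∀ i, ν₁ (s i ×ˢ univ) ≠ ∞)
    (h : ∀ ⦃A : Set α⦄ ⦃B : Set β⦄, MeasurableSet A → MeasurableSet B →
      ν₁ (A ×ˢ B) = ν₂ (A ×ˢ B)) :
    ν₁ = ν₂ := by
  refine ext_of_generateFrom_of_iUnion (image2 (· ×ˢ ·) {A | MeasurableSet A} {B | MeasurableSet B})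
    (fun i => s i ×ˢ univ) generateFrom_prod.symm isPiSystem_prod ?_
    (fun i => mem_image2_of_mem (hs i) MeasurableSet.univ) hfin ?_
  · rw [← iUnion_prod_const, hcover, univ_prod_univ]
  · rintro _ ⟨A, hA, B, hB, rfl⟩
    exact h hA hB

theorem compProd_apply_prod_univ (μ : Measure α) [SFinite μ] (κ : Kernel α β) [IsMarkovKernel κ]
    {A : Set α} (hA : MeasurableSet A) : (μ ⊗ₘ κ) (A ×ˢ univ) = μ A := by
  rw [prod_univ, ← fst_apply hA, fst_compProd]

theorem compProd_map_swap_eq_self_of_apply_prod_comm {μ : Measure α} [SigmaFinite μ]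
    {κ : Kernel α α} [IsMarkovKernel κ]
    (h : ∀ ⦃A B : Set α⦄, MeasurableSet A → MeasurableSet B →
      (μ ⊗ₘ κ) (A ×ˢ B) = (μ ⊗ₘ κ) (B ×ˢ A)) :
    (μ ⊗ₘ κ).map Prod.swap = μ ⊗ₘ κ := by
  refine (ext_of_prod_of_iUnion_prod_univ (spanningSets μ) (measurableSet_spanningSets μ)
    (iUnion_spanningSets μ) (fun i => ?_) fun A B hA hB => ?_).symm
  · rw [compProd_apply_prod_univ μ κ (measurableSet_spanningSets μ i)]
    exact (measure_spanningSets_lt_top μ i).ne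
  · rw [map_apply measurable_swap (hA.prod hB), preimage_swap_prod, h hA hB]

end MeasureTheory.Measure

theorem TwistedDetailedBalance.apply_prod_comm {E : Type*} [MeasurableSpace E] {π : Measure E}
    {R : E → E} {κ : Kernel E E} (h : TwistedDetailedBalance π R κ) (hR : Measurable R)
    {S T : Set E} (hS : MeasurableSet S) (hT : MeasurableSet T) (hRS : R ⁻¹' S = S)
    (hRT : R ⁻¹' T = T) :
    (π.compProd κ) (S ×ˢ T) = (π.compProd κ) (T ×ˢ S) := by
  have hpreimage : (fun xy : E × E => (R xy.2, R xy.1)) ⁻¹' (S ×ˢ T) = T ×ˢ S := by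
    conv_rhs => rw [← hRS, ← hRT]
    ext; simp [and_comm]
  conv_lhs => rw [← h]
  rw [Measure.map_apply (by fun_prop) (hS.prod hT), hpreimage]

namespace ProbabilityTheory.Kernel

variable {Φ Ψ Φ' Ψ' : Type*} [MeasurableSpace Φ] [MeasurableSpace Ψ] [MeasurableSpace Φ']
  [MeasurableSpace Ψ']

def IsMarginal (κbar : Kernel Φ Φ') (κ : Kernel (Φ × Ψ) (Φ' × Ψ')) (ν : Measure Ψ) : Prop :=
  ∀ φ (A : Set Φ'), MeasurableSet A → κbar φ A = ∫⁻ ψ, κ (φ, ψ) (A ×ˢ univ) ∂ν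

theorem IsMarginal.compProd_apply_prod {ν : Measure Ψ} [SFinite ν]
    {κ : Kernel (Φ × Ψ) (Φ' × Ψ')} [IsSFiniteKernel κ] {κbar : Kernel Φ Φ'} [IsSFiniteKernel κbar]
    (hκbar : κbar.IsMarginal κ ν) (μ : Measure Φ) [SFinite μ] {A : Set Φ} {B : Set Φ'}
    (hA : MeasurableSet A) (hB : MeasurableSet B) :
    (μ ⊗ₘ κbar) (A ×ˢ B) = (μ.prod ν ⊗ₘ κ) ((A ×ˢ univ) ×ˢ (B ×ˢ univ)) := by
  rw [Measure.compProd_apply_prod hA hB,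
    Measure.compProd_apply_prod (hA.prod .univ) (hB.prod .univ),
    ← Measure.restrict_prod_eq_prod_univ,
    MeasureTheory.lintegral_prod _ (κ.measurable_coe (hB.prod .univ)).aemeasurable]
  exact setLIntegral_congr_fun hA fun φ _ => hκbar φ B hB

end ProbabilityTheory.Kernel

theorem marginal_detailedBalance_general {Φ Ψ : Type*} [MeasurableSpace Φ] [MeasurableSpace Ψ]
    (πΦ : Measure Φ) [SigmaFinite πΦ]
    (πΨ : Measure Ψ) [IsProbabilityMeasure πΨ]
    (σ : Ψ → Ψ) (hσ : Measurable σ)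
    (κ : Kernel (Φ × Ψ) (Φ × Ψ)) [IsMarkovKernel κ]
    (h : TwistedDetailedBalance (πΦ.prod πΨ) (fun x => (x.1, σ x.2)) κ)
    (κbar : Kernel Φ Φ) [IsMarkovKernel κbar]
    (hκbar : ∀ φ (A : Set Φ), MeasurableSet A →
      κbar φ A = ∫⁻ ψ, κ (φ, ψ) (A ×ˢ (Set.univ : Set Ψ)) ∂πΨ) :
    (πΦ.compProd κbar).map Prod.swap = πΦ.compProd κbar := by
  have hmarginal : κbar.IsMarginal κ πΨ := hκbar
  have hR : ∀ A : Set Φ, (fun x : Φ × Ψ => (x.1, σ x.2)) ⁻¹' (A ×ˢ univ) = A ×ˢ univ :=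
    fun _ => rfl
  refine Measure.compProd_map_swap_eq_self_of_apply_prod_comm fun A B hA hB => ?_
  rw [hmarginal.compProd_apply_prod πΦ hA hB, hmarginal.compProd_apply_prod πΦ hB hA]
  exact h.apply_prod_comm (by fun_prop) (hA.prod .univ) (hB.prod .univ) (hR A) (hR B)

/-- If a Markov kernel `κ` on `Φ × Ψ` satisfies `R`-twisted detailed balance with respect to
the product measure `π_Φ × π_Ψ`, where `R (φ, ψ) = (φ, σ ψ)` with `σ` a measurable involution
preserving the probability measure `π_Ψ`, then the marginal kernel
`κ̄(φ, A) = ∫_Ψ κ((φ, ψ), A × Ψ) π_Ψ(dψ)` satisfies ordinary detailed balance with respect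
to `π_Φ`: the measure `π_Φ ⊗ κ̄` is invariant under the swap `(φ, φ′) ↦ (φ′, φ)`. -/
theorem marginal_detailedBalance {Φ Ψ : Type*} [MeasurableSpace Φ] [MeasurableSpace Ψ]
    (πΦ : Measure Φ) [SigmaFinite πΦ]
    (πΨ : Measure Ψ) [IsProbabilityMeasure πΨ]
    (σ : Ψ → Ψ) (hσ : Measurable σ) (hσσ : σ ∘ σ = id) (hσπ : πΨ.map σ = πΨ)
    (κ : Kernel (Φ × Ψ) (Φ × Ψ)) [IsMarkovKernel κ]
    (h : TwistedDetailedBalance (πΦ.prod πΨ) (fun x => (x.1, σ x.2)) κ)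
    (κbar : Kernel Φ Φ) [IsMarkovKernel κbar]
    (hκbar : ∀ φ (A : Set Φ), MeasurableSet A →
      κbar φ A = ∫⁻ ψ, κ (φ, ψ) (A ×ˢ (Set.univ : Set Ψ)) ∂πΨ) :
    (πΦ.compProd κbar).map Prod.swap = πΦ.compProd κbar :=
  marginal_detailedBalance_general πΦ πΨ σ hσ κ h κbar hκbar
end

section
/- Let E be a measurable space, π a σ-finite measure on E, R : E → E a measurable map, (T, μ) a probability space, and κ a Markov kernel from T × E to E (a jointly measurable family of kernels (κ_t)_{t∈T}, κ_t(x, ·) = κ((t, x), ·)). Suppose that for every t ∈ T the kernel κ_t satisfies R-twisted detailed balance with respect to π. Then the mixture kernel κ̄ defined by κ̄(x, B) = ∫_T κ((t, x), B) μ(dt) also satisfies R-twisted detailed balance with respect to π. -/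
/-! By Tonelli, `π ⊗ κ̄` is the `μ`-mixture `∫ (π ⊗ κ_t) dμ(t)`, and invariance under a fixed
measurable map passes from the measures `π ⊗ κ_t` to their mixture. -/

open MeasureTheory ProbabilityTheory

namespace MeasureTheory.Measure

variable {T α β : Type*} [MeasurableSpace T] [MeasurableSpace α] [MeasurableSpace β]

theorem map_eq_self_of_apply_eq_lintegral {μ : Measure T} {ν : Measure α} {ρ : T → Measure α}
    {f : α → α} (hf : Measurable f) (hν : ∀ s, MeasurableSet s → ν s = ∫⁻ t, ρ t s ∂μ)
    (hρ : ∀ t, (ρ t).map f = ρ t) : ν.map f = ν := by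
  ext s hs
  rw [map_apply hf hs, hν _ (hf hs), hν _ hs]
  refine lintegral_congr fun t => ?_
  rw [← map_apply hf hs, hρ]

theorem compProd_apply_eq_lintegral_compProd_comap (π : Measure α) [SFinite π]
    (μ : Measure T) [SFinite μ] {κ : Kernel (T × α) β} [IsSFiniteKernel κ]
    {κbar : Kernel α β} [IsSFiniteKernel κbar]
    (hκbar : ∀ x B, MeasurableSet B → κbar x B = ∫⁻ t, κ (t, x) B ∂μ)
    {s : Set (α × β)} (hs : MeasurableSet s) :
    π.compProd κbar s = ∫⁻ t, π.compProd (κ.comap (Prod.mk t) measurable_prodMk_left) s ∂μ := by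
  have hsec : Measurable fun p : T × α => κ p (Prod.mk p.2 ⁻¹' s) :=
    Kernel.measurable_kernel_prodMk_left (κ := κ)
      ((measurable_fst.snd.prodMk measurable_snd) hs)
  simp_rw [compProd_apply hs, hκbar _ _ (measurable_prodMk_left hs)]
  exact lintegral_lintegral_swap (hsec.comp measurable_swap).aemeasurable

end MeasureTheory.Measure

/-- If `(κ_t)_{t ∈ T}` is a jointly measurable family of Markov kernels (encoded as a Markov
kernel from `T × E` to `E`) such that each `κ_t` satisfies `R`-twisted detailed balance with
respect to `π`, and `μ` is a probability measure on `T`, then the mixture kernel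
`κ̄(x, B) = ∫_T κ((t, x), B) μ(dt)` also satisfies `R`-twisted detailed balance with
respect to `π`. -/
theorem twistedDetailedBalance_mixture {T E : Type*} [MeasurableSpace T] [MeasurableSpace E]
    (π : Measure E) [SigmaFinite π] (R : E → E) (hR : Measurable R)
    (μ : Measure T) [IsProbabilityMeasure μ]
    (κ : Kernel (T × E) E) [IsMarkovKernel κ]
    (h : ∀ t : T, TwistedDetailedBalance π R (κ.comap (Prod.mk t) measurable_prodMk_left))
    (κbar : Kernel E E) [IsMarkovKernel κbar]
    (hκbar : ∀ x (B : Set E), MeasurableSet B → κbar x B = ∫⁻ t, κ (t, x) B ∂μ) :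
    TwistedDetailedBalance π R κbar :=
  Measure.map_eq_self_of_apply_eq_lintegral
    ((hR.comp measurable_snd).prodMk (hR.comp measurable_fst))
    (fun _ hs => Measure.compProd_apply_eq_lintegral_compProd_comap π μ hκbar hs) h
end

section
/- Let E be a measurable space equipped with a σ-finite measure λ, let H : E → ℝ be measurable, let β > 0, and let π be the measure with density x ↦ exp(−β H(x)) with respect to λ. Let F : E → E be a measurable bijection with measurable inverse such that F is measure-preserving for λ and H ∘ F = H, and let R : E → E be a measurable involution (R ∘ R = id) that is measure-preserving for λ and satisfies H ∘ R = H and R ∘ F ∘ R = F⁻¹. Then the deterministic Markov kernel κ(x, ·) = δ_{F(x)} satisfies R-twisted detailed balance with respect to π; equivalently, the pushforward of π under the map x ↦ (x, F(x)) equals the pushforward of π under the map x ↦ (R(F(x)), R(x)). -/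
/-!
`R ∘ F` preserves `λ` and `H`, hence preserves the Gibbs measure `π`. Reversibility
`R ∘ F ∘ R = F⁻¹` together with `R ∘ R = id` gives `F ∘ (R ∘ F) = R`, so the map
`x ↦ (R (F x), R x)` is the graph map `x ↦ (x, F x)` precomposed with `R ∘ F`; pushing `π`
forward along either therefore gives the same measure, which is `π ⊗ δ_F`.
-/

open MeasureTheory ProbabilityTheory

theorem Function.Involutive.comp_comp_eq_of_leftInverse {α : Type*} {R F G : α → α}
    (hR : Function.Involutive R) (hGF : Function.LeftInverse G F) (hRFR : R ∘ F ∘ R = G) :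
    F ∘ R ∘ F = R := by
  funext x
  calc F (R (F x)) = R (R (F (R (F x)))) := (hR _).symm
    _ = R (G (F x)) := by rw [← hRFR]; rfl
    _ = R x := by rw [hGF x]

section

variable {α β : Type*} [MeasurableSpace α] [MeasurableSpace β] {μ : Measure α} {ν : Measure β}

theorem MeasureTheory.MeasurePreserving.map_withDensity_comp {T : α → β}
    (hT : MeasurePreserving T μ ν) {g : β → ENNReal} (hg : Measurable g) :
    (μ.withDensity (g ∘ T)).map T = ν.withDensity g := by
  ext s hs
  rw [Measure.map_apply hT.measurable hs, withDensity_apply _ (hT.measurable hs),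
    withDensity_apply _ hs]
  exact (hT.restrict_preimage hs).lintegral_comp hg

theorem MeasureTheory.MeasurePreserving.withDensity_of_comp_eq {T : α → α}
    (hT : MeasurePreserving T μ μ) {f : α → ENNReal} (hf : Measurable f) (hfT : f ∘ T = f) :
    MeasurePreserving T (μ.withDensity f) (μ.withDensity f) :=
  ⟨hT.measurable, by simpa only [hfT] using hT.map_withDensity_comp hf⟩

theorem map_prodMk_eq_map_prodMk_of_measurePreserving {π : Measure α} {F R : α → α}
    (hF : Measurable F) (hRF : MeasurePreserving (R ∘ F) π π) (hFRF : F ∘ R ∘ F = R) :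
    π.map (fun x => (x, F x)) = π.map (fun x => (R (F x), R x)) := by
  have hgraph : (fun x => (R (F x), R x)) = (fun x => (x, F x)) ∘ (R ∘ F) := by
    funext x
    exact congrArg (Prod.mk (R (F x))) (congrFun hFRF x).symm
  rw [hgraph, ← Measure.map_map (measurable_id'.prodMk hF) hRF.measurable, hRF.map_eq]

theorem twistedDetailedBalance_deterministic_iff {π : Measure α} [SFinite π] {F R : α → α}
    (hF : Measurable F) (hR : Measurable R) :
    TwistedDetailedBalance π R (Kernel.deterministic F hF) ↔
      π.map (fun x => (x, F x)) = π.map (fun x => (R (F x), R x)) := by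
  rw [TwistedDetailedBalance, Measure.compProd_deterministic,
    Measure.map_map (by fun_prop : Measurable fun xy : α × α => (R xy.2, R xy.1))
      (measurable_id'.prodMk hF), eq_comm]
  rfl

end

theorem deterministic_twistedDetailedBalance_general {E : Type*} [MeasurableSpace E]
    (lam : Measure E) [SigmaFinite lam]
    (H : E → ℝ) (hH : Measurable H) (β : ℝ)
    (π : Measure E)
    (hπ : π = lam.withDensity fun x => ENNReal.ofReal (Real.exp (-β * H x)))
    (F G : E → E) (hF : Measurable F)
    (hGF : Function.LeftInverse G F)
    (hFpres : MeasurePreserving F lam lam) (hHF : H ∘ F = H)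
    (R : E → E) (hR : Measurable R) (hRR : R ∘ R = id)
    (hRpres : MeasurePreserving R lam lam) (hHR : H ∘ R = H)
    (hRFR : R ∘ F ∘ R = G) :
    TwistedDetailedBalance π R (Kernel.deterministic F hF) ∧
      π.map (fun x => (x, F x)) = π.map (fun x => (R (F x), R x)) := by
  have : SFinite π := hπ ▸ inferInstance
  have hHRF : H ∘ (R ∘ F) = H := by rw [← Function.comp_assoc, hHR, hHF]
  have hπRF : MeasurePreserving (R ∘ F) π π := hπ ▸
    (hRpres.comp hFpres).withDensity_of_comp_eq (by fun_prop)
      (funext fun x => congrArg (fun h => ENNReal.ofReal (Real.exp (-β * h))) (congrFun hHRF x))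
  have hFRF : F ∘ R ∘ F = R :=
    Function.Involutive.comp_comp_eq_of_leftInverse (congrFun hRR) hGF hRFR
  have hgraph := map_prodMk_eq_map_prodMk_of_measurePreserving hF hπRF hFRF
  exact ⟨(twistedDetailedBalance_deterministic_iff hF hR).2 hgraph, hgraph⟩

/-- Let `π` have density `exp (-β H)` with respect to a σ-finite measure `λ`. If `F` is a
measurable bijection (with measurable inverse `G`) preserving `λ` and `H`, and `R` is a
measurable involution preserving `λ` and `H` with `R ∘ F ∘ R = F⁻¹`, then the deterministic
kernel `x ↦ δ_{F x}` satisfies `R`-twisted detailed balance with respect to `π`;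
equivalently, the pushforward of `π` under `x ↦ (x, F x)` equals the pushforward of `π`
under `x ↦ (R (F x), R x)`. -/
theorem deterministic_twistedDetailedBalance {E : Type*} [MeasurableSpace E]
    (lam : Measure E) [SigmaFinite lam]
    (H : E → ℝ) (hH : Measurable H) (β : ℝ) (hβ : 0 < β)
    (π : Measure E)
    (hπ : π = lam.withDensity fun x => ENNReal.ofReal (Real.exp (-β * H x)))
    (F G : E → E) (hF : Measurable F) (hG : Measurable G)
    (hGF : Function.LeftInverse G F) (hFG : Function.RightInverse G F)
    (hFpres : MeasurePreserving F lam lam) (hHF : H ∘ F = H)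
    (R : E → E) (hR : Measurable R) (hRR : R ∘ R = id)
    (hRpres : MeasurePreserving R lam lam) (hHR : H ∘ R = H)
    (hRFR : R ∘ F ∘ R = G) :
    TwistedDetailedBalance π R (Kernel.deterministic F hF) ∧
      π.map (fun x => (x, F x)) = π.map (fun x => (R (F x), R x)) :=
  deterministic_twistedDetailedBalance_general lam H hH β π hπ F G hF hGF hFpres hHF R hR hRR hRpres
    hHR hRFR
end

section
/- Let β, m, V, Z > 0, let d ≥ 1 and N be natural numbers, let μ ∈ ℝ, let a, b ∈ ℝ, and let p ∈ ℝ^{dN}, p_new ∈ ℝ^{d}. Define the grand-canonical weights w_k(u) = (1/Z)·(1/k!)·e^{βμk − βu}, the per-particle momentum normalizer Z_p = (2πm/β)^{d/2}, the kinetic energies K₀ = ‖p‖²/(2m) and K₁ = (‖p‖² + ‖p_new‖²)/(2m), the insertion density value π_ins = (1/(V·Z_p))·exp(−β‖p_new‖²/(2m)), and δℋ = a − b + (1/β)·log(N+1) − (1/β)·log(V) − μ. Then the reversible-jump acceptance ratio equals the DHMC exponential factor: (w_{N+1}(a)·e^{−βK₁} / Z_p^{N+1}) / (w_N(b)·π_ins·e^{−βK₀}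 / Z_p^{N}) = e^{−β·δℋ}. -/
open Real

/-!
Inserting a particle multiplies the grand-canonical weight by `e^{β(μ - (a - b))}/(N+1)`, and
the new kinetic factor `e^{-β‖p_new‖²/(2m)}` together with the extra momentum normalizer `Z_p`
is exactly cancelled by the insertion density, which leaves the factor `V`. Exponentiating
`-β δℋ` produces the same product `V e^{β(μ - (a - b))}/(N+1)`.
-/

noncomputable def grandCanonicalWeight (Z β μ : ℝ) (k : ℕ) (u : ℝ) : ℝ :=
  (1 / Z) * (1 / (Nat.factorial k : ℝ)) * exp (β * μ * k - β * u)

theorem grandCanonicalWeight_succ (Z β μ : ℝ) (N : ℕ) (a b : ℝ) :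
    grandCanonicalWeight Z β μ (N + 1) a =
      grandCanonicalWeight Z β μ N b * (exp (β * (μ - (a - b))) / ((N : ℝ) + 1)) := by
  have hexp : β * μ * ((N : ℝ) + 1) - β * a = (β * μ * N - β * b) + β * (μ - (a - b)) := by ring
  simp only [grandCanonicalWeight, Nat.factorial_succ, Nat.cast_mul, Nat.cast_succ, hexp,
    exp_add]
  field_simp

theorem exp_neg_mul_add_log_sub_log {β V n : ℝ} (hβ : β ≠ 0) (hV : 0 < V) (hn : 0 < n)
    (E : ℝ) :
    exp (-β * (E + 1 / β * log n - 1 / β * log V)) = V / n * exp (-β * E) := by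
  have hsplit : -β * (E + 1 / β * log n - 1 / β * log V) = -β * E + log V - log n := by
    field_simp; ring
  rw [hsplit, exp_sub, exp_add, exp_log hV, exp_log hn]
  ring

theorem rjmcmc_ratio_eq_dhmc_factor_general (β m V Z : ℝ)
    (hβ : 0 < β) (hm : 0 < m) (hV : 0 < V) (hZ : 0 < Z)
    (d N : ℕ) (μ : ℝ)
    (p : EuclideanSpace ℝ (Fin (d * N))) (pnew : EuclideanSpace ℝ (Fin d))
    (a b : ℝ)
    (w : ℕ → ℝ → ℝ)
    (hw : ∀ (k : ℕ) (u : ℝ), w k u = (1 / Z) * (1 / (Nat.factorial k : ℝ)) *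
      Real.exp (β * μ * k - β * u))
    (Zp K₀ K₁ πins δH : ℝ)
    (hZp : Zp = (2 * π * m / β) ^ ((d : ℝ) / 2))
    (hK₀ : K₀ = ‖p‖ ^ 2 / (2 * m))
    (hK₁ : K₁ = (‖p‖ ^ 2 + ‖pnew‖ ^ 2) / (2 * m))
    (hπins : πins = (1 / (V * Zp)) * Real.exp (-β * ‖pnew‖ ^ 2 / (2 * m)))
    (hδH : δH = a - b + (1 / β) * Real.log ((N : ℝ) + 1) - (1 / β) * Real.log V - μ) :
    (w (N + 1) a * Real.exp (-β * K₁) / Zp ^ (N + 1)) /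
        (w N b * πins * Real.exp (-β * K₀) / Zp ^ N) =
      Real.exp (-β * δH) := by
  have hw' : w = grandCanonicalWeight Z β μ := funext fun k => funext (hw k)
  have hZp_pos : 0 < Zp := hZp ▸ rpow_pos_of_pos (by positivity) _
  have hw_pos : 0 < w N b := by rw [hw]; positivity
  have hinsert : w (N + 1) a = w N b * (exp (β * (μ - (a - b))) / ((N : ℝ) + 1)) :=
    hw' ▸ grandCanonicalWeight_succ Z β μ N a b
  have hkinetic : exp (-β * K₁) = exp (-β * K₀) * exp (-β * ‖pnew‖ ^ 2 / (2 * m)) := by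
    rw [← exp_add, hK₀, hK₁]; congr 1; ring
  have hbarrier : δH = (a - b - μ) + 1 / β * log ((N : ℝ) + 1) - 1 / β * log V := by
    rw [hδH]; ring
  rw [hbarrier, exp_neg_mul_add_log_sub_log hβ.ne' hV (by positivity), hkinetic, hπins,
    hinsert, pow_succ]
  field_simp
  ring_nf

/-- The reversible-jump acceptance ratio for a particle insertion equals the DHMC
exponential factor: with grand-canonical weights `w_k(u) = (1/Z)(1/k!)e^{βμk - βu}`,
per-particle momentum normalizer `Z_p = (2πm/β)^{d/2}`, kinetic energies `K₀, K₁`,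
insertion density `π_ins = (1/(V Z_p)) exp(-β‖p_new‖²/(2m))`, and free-energy barrier
`δℋ = a - b + (1/β) log(N+1) - (1/β) log V - μ`, one has
`(w_{N+1}(a) e^{-βK₁} / Z_p^{N+1}) / (w_N(b) π_ins e^{-βK₀} / Z_p^N) = e^{-β δℋ}`. -/
theorem rjmcmc_ratio_eq_dhmc_factor (β m V Z : ℝ)
    (hβ : 0 < β) (hm : 0 < m) (hV : 0 < V) (hZ : 0 < Z)
    (d N : ℕ) (hd : 1 ≤ d) (μ : ℝ)
    (p : EuclideanSpace ℝ (Fin (d * N))) (pnew : EuclideanSpace ℝ (Fin d))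
    (a b : ℝ)
    (w : ℕ → ℝ → ℝ)
    (hw : ∀ (k : ℕ) (u : ℝ), w k u = (1 / Z) * (1 / (Nat.factorial k : ℝ)) *
      Real.exp (β * μ * k - β * u))
    (Zp K₀ K₁ πins δH : ℝ)
    (hZp : Zp = (2 * π * m / β) ^ ((d : ℝ) / 2))
    (hK₀ : K₀ = ‖p‖ ^ 2 / (2 * m))
    (hK₁ : K₁ = (‖p‖ ^ 2 + ‖pnew‖ ^ 2) / (2 * m))
    (hπins : πins = (1 / (V * Zp)) * Real.exp (-β * ‖pnew‖ ^ 2 / (2 * m)))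
    (hδH : δH = a - b + (1 / β) * Real.log ((N : ℝ) + 1) - (1 / β) * Real.log V - μ) :
    (w (N + 1) a * Real.exp (-β * K₁) / Zp ^ (N + 1)) /
        (w N b * πins * Real.exp (-β * K₀) / Zp ^ N) =
      Real.exp (-β * δH) :=
  rjmcmc_ratio_eq_dhmc_factor_general β m V Z hβ hm hV hZ d N μ p pnew a b w hw Zp K₀ K₁ πins δH hZp
    hK₀ hK₁ hπins hδH
end
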